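/- arXiv:math/0604098 — 2 statements merged into one kernel-verified Lean document; each statement's English description precedes it below -/
import Mathlib

section
/- Let G : ℝ × ℝ → ℝ be continuously differentiable and 2π-periodic in its second variable, let ω, A₀, t₀ ∈ ℝ and T > 0. Define M(t₀) = (1/T) ∫₀ᵀ G(ω t, t + t₀) dt (where G(α, s) denotes the function evaluated at angle α and time s, and the integrand is T-periodic in t). Then ω · (1/T) ∫₀ᵀ ∂₁G(ω t, t + t₀) dt = − M'(t₀), where ∂₁G denotes the partial derivative of G with respect to its first argument, provided the map t ↦ G(ω t, t + t₀) is T-periodic. -/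
/-!
Along the curve `t ↦ (ω t, t + s)` the derivative of `G` is `ω ∂₁G + ∂₂G`, and its integral over
one period vanishes because the curve returns to the same value of `G` after time `T`. On the
other hand, differentiating under the integral sign gives `M' = (1/T) ∫₀ᵀ ∂₂G(ω t, t + t₀) dt`.
-/

open MeasureTheory Metric Set

variable {E : Type*} [NormedAddCommGroup E] [NormedSpace ℝ E]

theorem HasFDerivAt.comp_hasDerivAt_prodMk {G : ℝ × ℝ → E} {L : ℝ × ℝ →L[ℝ] E}
    {u v : ℝ → ℝ} {u' v' t : ℝ} (hG : HasFDerivAt G L (u t, v t)) (hu : HasDerivAt u u' t)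
    (hv : HasDerivAt v v' t) : HasDerivAt (fun t => G (u t, v t)) (L (u', v')) t :=
  hG.comp_hasDerivAt t (hu.prodMk hv)

theorem ContinuousLinearMap.apply_prod_eq_smul_add_smul (L : ℝ × ℝ →L[ℝ] E) (a b : ℝ) :
    L (a, b) = a • L (1, 0) + b • L (0, 1) := by
  rw [← map_smul, ← map_smul, ← map_add]
  simp

theorem intervalIntegral.hasDerivAt_integral_of_continuous [CompleteSpace E]
    {F F' : ℝ → ℝ → E} (hF : Continuous (Function.uncurry F))
    (hF' : Continuous (Function.uncurry F'))
    (hderiv : ∀ s t, HasDerivAt (fun s => F s t) (F' s t) s) (a b s₀ : ℝ) :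
    HasDerivAt (fun s => ∫ t in a..b, F s t) (∫ t in a..b, F' s₀ t) s₀ := by
  obtain ⟨C, hC⟩ := (isCompact_closedBall s₀ 1 |>.prod isCompact_uIcc).exists_bound_of_continuousOn
    hF'.continuousOn
  have hFc : ∀ s, Continuous (F s) := fun s => hF.comp (Continuous.prodMk_right s)
  refine (intervalIntegral.hasDerivAt_integral_of_dominated_loc_of_deriv_le (bound := fun _ => C)
    (ball_mem_nhds s₀ one_pos) (.of_forall fun s => (hFc s).aestronglyMeasurable)
    ((hFc s₀).intervalIntegrable a b)
    (hF'.comp (Continuous.prodMk_right s₀)).aestronglyMeasurable ?_ intervalIntegrable_const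
    (.of_forall fun t _ s _ => hderiv s t)).2
  exact .of_forall fun t ht s hs =>
    hC (s, t) ⟨ball_subset_closedBall hs, uIoc_subset_uIcc ht⟩

theorem smul_integral_fderiv_fst_eq_neg_integral_fderiv_snd [CompleteSpace E] {G : ℝ × ℝ → E}
    (hG : ContDiff ℝ 1 G) {ω s T : ℝ} (hper : G (ω * T, T + s) = G (0, s)) :
    ω • ∫ t in (0:ℝ)..T, fderiv ℝ G (ω * t, t + s) (1, 0)
      = -∫ t in (0:ℝ)..T, fderiv ℝ G (ω * t, t + s) (0, 1) := by
  have hGd := hG.differentiable one_ne_zero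
  have hG' := hG.continuous_fderiv one_ne_zero
  have hline : ∀ t, HasDerivAt (fun t => G (ω * t, t + s))
      (ω • fderiv ℝ G (ω * t, t + s) (1, 0) + fderiv ℝ G (ω * t, t + s) (0, 1)) t := by
    intro t
    convert (hGd _).hasFDerivAt.comp_hasDerivAt_prodMk
      (hasDerivAt_const_mul ω) ((hasDerivAt_id' t).add_const s) using 1
    rw [ContinuousLinearMap.apply_prod_eq_smul_add_smul _ ω, one_smul]
  have hint₁ : IntervalIntegrable (fun t => ω • fderiv ℝ G (ω * t, t + s) (1, 0)) volume 0 T :=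
    Continuous.intervalIntegrable (by fun_prop) 0 T
  have hint₂ : IntervalIntegrable (fun t => fderiv ℝ G (ω * t, t + s) (0, 1)) volume 0 T :=
    Continuous.intervalIntegrable (by fun_prop) 0 T
  have hzero := intervalIntegral.integral_eq_sub_of_hasDerivAt (fun t _ => hline t)
    (hint₁.add hint₂)
  rw [intervalIntegral.integral_add hint₁ hint₂, intervalIntegral.integral_smul,
    hper] at hzero
  simpa [eq_neg_iff_add_eq_zero] using hzero

theorem stmt_1_general (G : ℝ × ℝ → ℝ) (hG : ContDiff ℝ 1 G)
    (ω t₀ T : ℝ)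
    (hper : ∀ s t : ℝ, G (ω * (t + T), (t + T) + s) = G (ω * t, t + s))
    (M : ℝ → ℝ) (hM : ∀ s, M s = (1 / T) * ∫ t in (0:ℝ)..T, G (ω * t, t + s)) :
    ω * ((1 / T) * ∫ t in (0:ℝ)..T, deriv (fun a => G (a, t + t₀)) (ω * t))
      = - deriv M t₀ := by
  have hGd := hG.differentiable one_ne_zero
  have hM' : HasDerivAt M ((1 / T) * ∫ t in (0:ℝ)..T, fderiv ℝ G (ω * t, t + t₀) (0, 1)) t₀ := by
    rw [show M = _ from funext hM]
    refine (intervalIntegral.hasDerivAt_integral_of_continuous (F := fun s t => G (ω * t, t + s))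
      (F' := fun s t => fderiv ℝ G (ω * t, t + s) (0, 1))
      (by fun_prop) ?_ (fun s t => ?_) 0 T t₀).const_mul (1 / T)
    · have := hG.continuous_fderiv one_ne_zero
      fun_prop
    · exact (hGd _).hasFDerivAt.comp_hasDerivAt_prodMk (hasDerivAt_const s _)
        ((hasDerivAt_id s).const_add t)
  have hpartial : ∀ t, deriv (fun a => G (a, t + t₀)) (ω * t)
      = fderiv ℝ G (ω * t, t + t₀) (1, 0) := fun t =>
    ((hGd _).hasFDerivAt.comp_hasDerivAt_prodMk (hasDerivAt_id _) (hasDerivAt_const _ _)).deriv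
  have hkey := smul_integral_fderiv_fst_eq_neg_integral_fderiv_snd hG (ω := ω) (s := t₀)
    (T := T) (by simpa using hper t₀ 0)
  rw [intervalIntegral.integral_congr fun t _ => hpartial t, hM'.deriv, mul_left_comm,
    ← smul_eq_mul ω, hkey]
  ring

theorem stmt_1 (G : ℝ × ℝ → ℝ) (hG : ContDiff ℝ 1 G)
    (hper2 : ∀ a s, G (a, s + 2 * Real.pi) = G (a, s))
    (ω A₀ t₀ T : ℝ) (hT : 0 < T)
    (hper : ∀ s t : ℝ, G (ω * (t + T), (t + T) + s) = G (ω * t, t + s))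
    (M : ℝ → ℝ) (hM : ∀ s, M s = (1 / T) * ∫ t in (0:ℝ)..T, G (ω * t, t + s)) :
    ω * ((1 / T) * ∫ t in (0:ℝ)..T, deriv (fun a => G (a, t + t₀)) (ω * t))
      = - deriv M t₀ :=
  stmt_1_general G hG ω t₀ T hper M hM
end

section
/- Let T > 0 be an integer multiple of 2π (say T = 2πq for a positive integer q). Let x₀, y₀ : ℝ → ℝ be continuous T-periodic functions with y₀ = ẋ₀ and x₀ continuously differentiable, and suppose ∫₀ᵀ y₀(t)² dt > 0. Let f : ℝ × ℝ → ℝ be continuous and 2π-periodic in its second argument. Define C₀(t₀) = (∫₀ᵀ y₀(t) f(x₀(t), t + t₀) dt) / (∫₀ᵀ y₀(t)² dt). Then ∫₀^{2π} C₀(t₀) dt₀ = 0, i.e., the function C₀ has zero mean over [0, 2π]. -/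
/-!
Averaging over the phase `t₀` commutes with the time integral (Fubini), and by `2π`-periodicity
of `f` in time the phase integral of `f (x₀ t, t + t₀)` is `F (x₀ t)`, where
`F x = ∫₀^{2π} f (x, s) ds`. What remains is `∫₀ᵀ ẋ₀ F(x₀) dt = ∫_{x₀ 0}^{x₀ T} F`, which
vanishes because the orbit is closed.
-/

open MeasureTheory Set Function Real

theorem Function.Periodic.intervalIntegral_comp_add_left {E : Type*} [NormedAddCommGroup E]
    [NormedSpace ℝ E] {g : ℝ → E} {c : ℝ} (hg : Periodic g c) (t : ℝ) :
    ∫ s in (0 : ℝ)..c, g (t + s) = ∫ s in (0 : ℝ)..c, g s := by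
  simpa using hg.intervalIntegral_add_eq t 0

theorem intervalIntegral_intervalIntegral_swap_of_continuous {E : Type*} [NormedAddCommGroup E]
    [NormedSpace ℝ E] {F : ℝ → ℝ → E} (hF : Continuous F.uncurry) (a b c d : ℝ) :
    ∫ x in a..b, ∫ y in c..d, F x y = ∫ y in c..d, ∫ x in a..b, F x y :=
  intervalIntegral_intervalIntegral_swap <|
    (hF.continuousOn.integrableOn_compact (isCompact_uIcc.prod isCompact_uIcc)).mono_set
      (prod_mono uIoc_subset_uIcc uIoc_subset_uIcc)

theorem intervalIntegral_deriv_mul_comp_eq_zero {x x' G : ℝ → ℝ} {a b : ℝ}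
    (hx : ∀ t ∈ uIcc a b, HasDerivAt x (x' t) t) (hx' : ContinuousOn x' (uIcc a b))
    (hG : Continuous G) (hab : x a = x b) :
    ∫ t in a..b, x' t * G (x t) = 0 := by
  simpa [mul_comm, hab] using intervalIntegral.integral_comp_mul_deriv hx hx' hG

theorem stmt_3_general (T : ℝ)
    (x₀ y₀ : ℝ → ℝ) (hx : ∀ t, HasDerivAt x₀ (y₀ t) t) (hy : Continuous y₀)
    (hxp : ∀ t, x₀ (t + T) = x₀ t)
    (f : ℝ × ℝ → ℝ) (hf : Continuous f)
    (hf2 : ∀ x s, f (x, s + 2 * Real.pi) = f (x, s))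
    (C₀ : ℝ → ℝ)
    (hC : ∀ t₀, C₀ t₀ = (∫ t in (0:ℝ)..T, y₀ t * f (x₀ t, t + t₀)) /
      (∫ t in (0:ℝ)..T, (y₀ t) ^ 2)) :
    ∫ t₀ in (0:ℝ)..(2 * Real.pi), C₀ t₀ = 0 := by
  have hx₀ : Continuous x₀ := continuous_iff_continuousAt.mpr fun t => (hx t).continuousAt
  have hphase : ∀ t, ∫ t₀ in (0:ℝ)..2 * π, y₀ t * f (x₀ t, t + t₀) =
      y₀ t * ∫ s in (0:ℝ)..2 * π, f (x₀ t, s) := fun t => by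
    rw [intervalIntegral.integral_const_mul,
      Periodic.intervalIntegral_comp_add_left (g := fun s => f (x₀ t, s)) (hf2 (x₀ t))]
  have hmean : Continuous fun x => ∫ s in (0:ℝ)..2 * π, f (x, s) := by fun_prop
  have hclosed : x₀ 0 = x₀ T := by simpa using (hxp 0).symm
  simp_rw [hC, intervalIntegral.integral_div]
  rw [intervalIntegral_intervalIntegral_swap_of_continuous (by fun_prop)]
  simp_rw [hphase]
  rw [intervalIntegral_deriv_mul_comp_eq_zero (fun t _ => hx t) hy.continuousOn hmean hclosed,
    zero_div]

theorem stmt_3 (q : ℕ) (hq : 0 < q) (T : ℝ) (hT : T = 2 * Real.pi * q)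
    (x₀ y₀ : ℝ → ℝ) (hx : ∀ t, HasDerivAt x₀ (y₀ t) t) (hy : Continuous y₀)
    (hxp : ∀ t, x₀ (t + T) = x₀ t) (hyp : ∀ t, y₀ (t + T) = y₀ t)
    (hpos : 0 < ∫ t in (0:ℝ)..T, (y₀ t) ^ 2)
    (f : ℝ × ℝ → ℝ) (hf : Continuous f)
    (hf2 : ∀ x s, f (x, s + 2 * Real.pi) = f (x, s))
    (C₀ : ℝ → ℝ)
    (hC : ∀ t₀, C₀ t₀ = (∫ t in (0:ℝ)..T, y₀ t * f (x₀ t, t + t₀)) /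
      (∫ t in (0:ℝ)..T, (y₀ t) ^ 2)) :
    ∫ t₀ in (0:ℝ)..(2 * Real.pi), C₀ t₀ = 0 :=
  stmt_3_general T x₀ y₀ hx hy hxp f hf hf2 C₀ hC
end
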